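/- Let V be a vector space over an infinite field K and let v₁, …, v_k ∈ V. Then there exist scalars α₁, …, α_k ∈ K, all nonzero, with α₁v₁ + ⋯ + α_k v_k = 0 if and only if for every index i the linear span of {v₁, …, v_k} equals the linear span of {v₁, …, v_k} \ {vᵢ} (i.e. each vᵢ lies in the span of the remaining vectors). -/

import Mathlib

/-!
A relation `∑ cⱼ vⱼ = 0` with `cᵢ ≠ 0` exists exactly when `vᵢ` lies in the span of the others.
So if every `vᵢ` is redundant, each coordinate hyperplane meets the relation space
`ker (c ↦ ∑ cⱼ vⱼ)` in a proper subspace, and since a vector space over an infinite field is not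
a finite union of proper subspaces, some relation avoids all of them.
-/

open Submodule

theorem Module.Dual.exists_forall_apply_ne_zero {K E ι : Type*} [DivisionRing K] [Infinite K]
    [AddCommGroup E] [Module K E] [Finite ι] (f : ι → Module.Dual K E) (hf : ∀ i, f i ≠ 0) :
    ∃ x, ∀ i, f i x ≠ 0 := by
  by_contra! h
  have hcover : ⋃ i, (LinearMap.ker (f i) : Set E) = Set.univ :=
    Set.eq_univ_of_forall fun x ↦ Set.mem_iUnion.mpr (h x)
  obtain ⟨i, hi⟩ := Subspace.exists_eq_top_of_iUnion_eq_univ hcover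
  exact hf i (LinearMap.ker_eq_top.mp hi)

theorem Submodule.exists_mem_forall_apply_ne_zero {K ι : Type*} [DivisionRing K] [Infinite K]
    [Finite ι] (W : Submodule K (ι → K)) (hW : ∀ i, ∃ c ∈ W, c i ≠ 0) :
    ∃ c ∈ W, ∀ i, c i ≠ 0 := by
  obtain ⟨c, hc⟩ := Module.Dual.exists_forall_apply_ne_zero
    (fun i ↦ (LinearMap.proj i).comp W.subtype) fun i hi ↦ by
      obtain ⟨c, hcW, hci⟩ := hW i
      exact hci (LinearMap.congr_fun hi ⟨c, hcW⟩)
  exact ⟨c, c.2, hc⟩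

section Relation

variable {K V ι : Type*} [DivisionRing K] [AddCommGroup V] [Module K V] [Fintype ι]
  [DecidableEq ι]

theorem mem_span_image_compl_iff_exists_relation (v : ι → V) (i : ι) :
    v i ∈ span K (v '' {i}ᶜ) ↔ ∃ c : ι → K, c i ≠ 0 ∧ ∑ j, c j • v j = 0 := by
  have hcompl : ({i}ᶜ : Set ι) = ↑(Finset.univ.erase i) := by simp [Set.compl_eq_univ_sdiff]
  rw [hcompl, mem_span_image_finset_iff_exists_fun']
  constructor
  · rintro ⟨c, hc⟩
    refine ⟨Function.update c i (-1), by simp, ?_⟩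
    rw [← Finset.add_sum_erase _ _ (Finset.mem_univ i), Function.update_self,
      Finset.sum_congr rfl fun j hj ↦ by rw [Function.update_of_ne (Finset.ne_of_mem_erase hj)],
      hc, neg_one_smul, neg_add_cancel]
  · rintro ⟨c, hci, hc⟩
    rw [← Finset.add_sum_erase _ _ (Finset.mem_univ i), add_eq_zero_iff_eq_neg'] at hc
    refine ⟨fun j ↦ -(c i)⁻¹ * c j, ?_⟩
    simp_rw [mul_smul]
    rw [← Finset.smul_sum, hc, neg_smul_neg, inv_smul_smul₀ hci]

end Relation

theorem span_range_eq_span_image_compl_iff {R M ι : Type*} [Semiring R] [AddCommMonoid M]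
    [Module R M] (v : ι → M) (i : ι) :
    span R (Set.range v) = span R (v '' {i}ᶜ) ↔ v i ∈ span R (v '' {i}ᶜ) := by
  rw [← Set.insert_image_compl_eq_range v i]
  exact ⟨fun h ↦ h ▸ subset_span (Set.mem_insert _ _), span_insert_eq_span⟩

/-- Over an infinite field, vectors `v₁, …, v_k` admit a linear relation with all
coefficients nonzero iff removing any one vector does not change the span. -/
theorem relation_all_nonzero_iff_span (K V : Type*) [Field K] [Infinite K]
    [AddCommGroup V] [Module K V] (k : ℕ) (v : Fin k → V) :
    (∃ α : Fin k → K, (∀ i, α i ≠ 0) ∧ ∑ i, α i • v i = 0) ↔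
      ∀ i : Fin k,
        Submodule.span K (Set.range v) = Submodule.span K (v '' ({i}ᶜ : Set (Fin k))) := by
  simp only [span_range_eq_span_image_compl_iff, mem_span_image_compl_iff_exists_relation]
  constructor
  · rintro ⟨α, hα, hrel⟩ i
    exact ⟨α, hα i, hrel⟩
  · intro h
    obtain ⟨α, hα_rel, hα_ne⟩ :=
      (LinearMap.ker (Fintype.linearCombination K v)).exists_mem_forall_apply_ne_zero
        fun i ↦ (h i).imp fun _ ↦ And.symm
    exact ⟨α, hα_ne, hα_rel⟩
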